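/- For every natural number n, the normal ordering (X + q s D_q)(X + q³ s D_q) ⋯ (X + q^{2n-1} s D_q) = Σ_{m=0}^{n} Σ_{j=0}^{min(m,n-m)} q^{n² + j² - (m+j)n} · [n]_q! · s^{n-m} / ((1+q)(1+q²)⋯(1+q^j) · [j]_q! · [m-j]_q! · [n-m-j]_q!) · X^{m-j} D_q^{n-m-j} holds as an identity of operators on the polynomial ring. -/

import Mathlib

noncomputable section

/-- The field `ℚ(q,s)` of rational functions in two indeterminates. -/
abbrev F : Type := FractionRing (MvPolynomial (Fin 2) ℚ)

/-- The indeterminate `q`. -/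
def q : F := algebraMap (MvPolynomial (Fin 2) ℚ) F (MvPolynomial.X 0)

/-- The indeterminate `s`. -/
def s : F := algebraMap (MvPolynomial (Fin 2) ℚ) F (MvPolynomial.X 1)

/-- The q-integer `[n]_q = 1 + q + ⋯ + q^{n-1}`. -/
def qInt (n : ℕ) : F := ∑ i ∈ Finset.range n, q ^ i

/-- The q-factorial `[n]_q! = ∏_{k=1}^n [k]_q`. -/
def qFact (n : ℕ) : F := ∏ k ∈ Finset.range n, qInt (k + 1)

/-- The q-binomial coefficient `[n choose k]_q = [n]_q!/([k]_q! [n-k]_q!)`. -/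
def qBinom (n k : ℕ) : F := qFact n / (qFact k * qFact (n - k))

/-- The operator `X` of multiplication by `x` on `F[x]`. -/
def Xop : Module.End F (Polynomial F) := LinearMap.mulLeft F Polynomial.X

/-- Division by `x` (discarding the constant term), as a linear map. -/
def divXL : Polynomial F →ₗ[F] Polynomial F where
  toFun := Polynomial.divX
  map_add' p r := Polynomial.divX_add
  map_smul' a p := by
    ext n
    simp [Polynomial.coeff_divX, Polynomial.coeff_smul]

/-- The q-derivative `D_q f(x) = (f(qx) - f(x))/((q-1)x)`; it is the F-linear
operator on `F[x]` determined by `D_q x^n = [n]_q x^{n-1}`. -/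
def Dq : Module.End F (Polynomial F) :=
  (q - 1)⁻¹ •
    (divXL ∘ₗ
      ((Polynomial.aeval (Polynomial.C q * Polynomial.X)).toLinearMap - LinearMap.id))

/-- The polynomials `h_n(x,t) = Σ_j q^{j²} t^j [n]_q!/((1+q)⋯(1+q^j)·[j]_q!·[n-2j]_q!)
x^{n-2j}` (the parameter `t` will be specialized to `s` or `q²s`). -/
def h (t : F) (n : ℕ) : Polynomial F :=
  ∑ j ∈ Finset.range (n / 2 + 1),
    Polynomial.C (q ^ (j ^ 2) * t ^ j * qFact n /
        ((∏ i ∈ Finset.range j, (1 + q ^ (i + 1))) * qFact j * qFact (n - 2 * j))) *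
      Polynomial.X ^ (n - 2 * j)


/-- `G(n) = (X + q s D_q)(X + q³ s D_q) ⋯ (X + q^{2n-1} s D_q)`,
with the factor `(X + q^{2n-1} s D_q)` acting first. -/
def Gop : ℕ → Module.End F (Polynomial F)
  | 0 => 1
  | n + 1 => Gop n * (Xop + (q ^ (2 * n + 1) * s) • Dq)


/-!
`Dq * Xop = 1 + q • (Xop * Dq)`, so `Xop` and `Dq` generate a quotient of the q-Weyl algebra, and
the normal ordering can be carried out in any `F`-algebra with elements `x, d` satisfying
`d * x = 1 + q • (x * d)`. There `d ^ b * x = [b]_q • d ^ (b - 1) + q ^ b • (x * d ^ b)`, so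
multiplying a term `x ^ a * d ^ b` on the right by `x + w • d` either raises `a`, raises `b`, or
contracts `d` against `x`, lowering `b` by one. Index the terms of `G(n)` by `(a, b, j)`, where
`j` counts contractions, so that `a + b + 2 * j = n`; the resulting coefficient recurrence is
solved by the closed form because `q ^ b * [a + b + 2 * j]_q` splits as
`q ^ (a + b + 2 * j) * [b]_q + q ^ b * [a]_q + q ^ (a + b) * (1 + q ^ j) * [j]_q`.
-/

open Finset Polynomial

lemma algebraMap_ne_zero_of_eval_ne_zero {p : MvPolynomial (Fin 2) ℚ} (v : Fin 2 → ℚ)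
    (h : MvPolynomial.eval v p ≠ 0) : algebraMap (MvPolynomial (Fin 2) ℚ) F p ≠ 0 := by
  rw [Ne, IsFractionRing.to_map_eq_zero_iff]
  rintro rfl
  exact h (map_zero _)

lemma q_sub_one_ne_zero : q - 1 ≠ 0 := by
  have := algebraMap_ne_zero_of_eval_ne_zero (p := MvPolynomial.X 0 - 1) 0 (by simp)
  simpa [q] using this

@[simp]
lemma qInt_succ_ne_zero (k : ℕ) : qInt (k + 1) ≠ 0 := by
  have := algebraMap_ne_zero_of_eval_ne_zero
    (p := ∑ i ∈ range (k + 1), MvPolynomial.X 0 ^ i) 1 (by simp; positivity)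
  simpa [qInt, q] using this

@[simp]
lemma one_add_q_pow_succ_ne_zero (k : ℕ) : 1 + q ^ (k + 1) ≠ 0 := by
  have := algebraMap_ne_zero_of_eval_ne_zero
    (p := 1 + MvPolynomial.X 0 ^ (k + 1)) 1 (by simp)
  simpa [q] using this

lemma qInt_zero : qInt 0 = 0 := sum_range_zero _

lemma qInt_add (m k : ℕ) : qInt (m + k) = qInt m + q ^ m * qInt k := by
  simp [qInt, sum_range_add, mul_sum, pow_add]

lemma qInt_succ (k : ℕ) : qInt (k + 1) = 1 + q * qInt k := by
  rw [add_comm, qInt_add]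
  simp [qInt]

lemma qInt_succ' (k : ℕ) : qInt (k + 1) = qInt k + q ^ k :=
  sum_range_succ _ _

lemma qFact_succ (k : ℕ) : qFact (k + 1) = qFact k * qInt (k + 1) :=
  prod_range_succ _ _

@[simp]
lemma qFact_ne_zero (k : ℕ) : qFact k ≠ 0 :=
  prod_ne_zero_iff.2 fun i _ => qInt_succ_ne_zero i

/-- The q-Pochhammer symbol `(-q; q)_j`. -/
def qPochNeg (j : ℕ) : F := ∏ i ∈ range j, (1 + q ^ (i + 1))

lemma qPochNeg_succ (j : ℕ) : qPochNeg (j + 1) = qPochNeg j * (1 + q ^ (j + 1)) :=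
  prod_range_succ _ _

@[simp]
lemma qPochNeg_ne_zero (j : ℕ) : qPochNeg j ≠ 0 :=
  prod_ne_zero_iff.2 fun i _ => one_add_q_pow_succ_ne_zero i

lemma qInt_two_mul (j : ℕ) : qInt (2 * j) = (1 + q ^ j) * qInt j := by
  rw [two_mul, qInt_add]
  ring

lemma q_pow_mul_qInt_split {a b j n : ℕ} (h : a + b + 2 * j = n) :
    q ^ b * qInt n = q ^ n * qInt b + q ^ b * qInt a + q ^ (a + b) * ((1 + q ^ j) * qInt j) := by
  rw [← h, show a + b + 2 * j = a + (2 * j + b) by ring, qInt_add, qInt_add, qInt_two_mul]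
  ring

/-- The coefficient of `x ^ a * d ^ b` coming from `j` contractions in `G(n)`. -/
def normalCoeff (n a b j : ℕ) : F :=
  q ^ (n * b + j ^ 2) * qFact n * s ^ (b + j) / (qPochNeg j * qFact j * qFact a * qFact b)

lemma normalCoeff_succ (n a b j : ℕ) :
    normalCoeff (n + 1) a b j = q ^ b * qInt (n + 1) * normalCoeff n a b j := by
  rw [normalCoeff, normalCoeff, qFact_succ, show (n + 1) * b + j ^ 2 = b + (n * b + j ^ 2) by ring,
    pow_add]
  ring

lemma normalCoeff_raise_d (n a b j : ℕ) :
    q ^ (n + 1) * qInt (b + 1) * normalCoeff n a (b + 1) j =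
      q ^ (2 * n + 1) * s * normalCoeff n a b j := by
  simp only [normalCoeff, qFact_succ]
  field_simp
  ring

lemma normalCoeff_raise_x (n a b j : ℕ) :
    qInt (a + 1) * normalCoeff n (a + 1) b j = normalCoeff n a b j := by
  simp only [normalCoeff, qFact_succ]
  field_simp

lemma normalCoeff_contract {n a b j : ℕ} (h : a + b + 2 * (j + 1) = n + 1) :
    q ^ (a + b) * ((1 + q ^ (j + 1)) * qInt (j + 1)) * normalCoeff n a b (j + 1) =
      qInt (b + 1) * normalCoeff n a (b + 1) j := by
  obtain rfl : n = a + b + 2 * j + 1 := by omega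
  simp only [normalCoeff, qFact_succ, qPochNeg_succ]
  field_simp
  ring

def contractionIndex (n : ℕ) : Finset (ℕ × ℕ × ℕ) :=
  (range (n + 1) ×ˢ range (n + 1) ×ˢ range (n + 1)).filter fun t => t.1 + t.2.1 + 2 * t.2.2 = n

@[simp]
lemma mem_contractionIndex {n : ℕ} {t : ℕ × ℕ × ℕ} :
    t ∈ contractionIndex n ↔ t.1 + t.2.1 + 2 * t.2.2 = n := by
  simp only [contractionIndex, mem_filter, mem_product, mem_range]
  omega

lemma Xop_apply (p : F[X]) : Xop p = X * p := rfl

lemma divXL_apply (p : F[X]) : divXL p = divX p := rfl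

lemma Dq_X_pow (k : ℕ) : Dq (X ^ k) = qInt k • X ^ (k - 1) := by
  have hdilate : aeval (C q * X) (X ^ k : F[X]) - X ^ k = C ((q - 1) * qInt k) * X ^ k := by
    rw [mul_comm (q - 1), qInt, geom_sum_mul, map_sub, map_pow, C_1, sub_mul, one_mul, map_pow,
      aeval_X, mul_pow]
  simp only [Dq, LinearMap.smul_apply, LinearMap.comp_apply, LinearMap.sub_apply,
    AlgHom.toLinearMap_apply, LinearMap.id_apply, hdilate, divXL_apply, divX_C_mul, divX_X_pow]
  rcases eq_or_ne k 0 with rfl | hk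
  · simp [qInt_zero]
  · rw [if_neg hk, smul_eq_C_mul, smul_eq_C_mul, ← mul_assoc, ← C_mul,
      inv_mul_cancel_left₀ q_sub_one_ne_zero]

lemma Dq_mul_Xop : Dq * Xop = 1 + q • (Xop * Dq) := by
  ext k : 2
  simp only [LinearMap.comp_apply, monomial_one_right_eq_X_pow, Module.End.mul_apply,
    LinearMap.add_apply, LinearMap.smul_apply, Module.End.one_apply, Xop_apply, ← pow_succ',
    Dq_X_pow, qInt_succ, add_smul, one_smul, Nat.add_sub_cancel]
  cases k with
  | zero => simp [qInt_zero]
  | succ k => rw [mul_smul_comm, ← pow_succ', Nat.add_sub_cancel, smul_smul]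

section QWeyl

variable {A : Type*} [Ring A] [Algebra F A] {x d : A}

lemma qWeyl_pow_mul (hxd : d * x = 1 + q • (x * d)) (b : ℕ) :
    d ^ b * x = qInt b • d ^ (b - 1) + q ^ b • (x * d ^ b) := by
  induction b with
  | zero => simp [qInt_zero]
  | succ b ih =>
    rw [pow_succ', mul_assoc, ih, mul_add, mul_smul_comm, mul_smul_comm, ← mul_assoc d x, hxd,
      add_mul, one_mul, smul_mul_assoc, mul_assoc, ← pow_succ', qInt_succ']
    cases b with
    | zero => simp [qInt_zero]
    | succ b =>
      rw [← pow_succ', Nat.add_sub_cancel, Nat.add_sub_cancel, smul_add, smul_smul, add_smul,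
        ← pow_succ]
      abel

lemma qWeyl_monomial_mul (hxd : d * x = 1 + q • (x * d)) (a b : ℕ) (w : F) :
    x ^ a * d ^ b * (x + w • d) =
      qInt b • (x ^ a * d ^ (b - 1)) + q ^ b • (x ^ (a + 1) * d ^ b) +
        w • (x ^ a * d ^ (b + 1)) := by
  rw [mul_add, mul_assoc, qWeyl_pow_mul hxd, mul_add, mul_smul_comm, mul_smul_comm, ← mul_assoc,
    ← pow_succ, mul_smul_comm, mul_assoc, ← pow_succ]

variable (x d) in
def normalOrder (n : ℕ) : A :=
  ∑ t ∈ contractionIndex n, normalCoeff n t.1 t.2.1 t.2.2 • (x ^ t.1 * d ^ t.2.1)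

lemma sum_contractionIndex_raise_d (n : ℕ) :
    ∑ t ∈ contractionIndex n,
        (normalCoeff n t.1 t.2.1 t.2.2 * (q ^ (2 * n + 1) * s)) • (x ^ t.1 * d ^ (t.2.1 + 1)) =
      ∑ u ∈ contractionIndex (n + 1),
        (q ^ (n + 1) * qInt u.2.1 * normalCoeff n u.1 u.2.1 u.2.2) • (x ^ u.1 * d ^ u.2.1) := by
  refine sum_of_injOn (fun t => (t.1, t.2.1 + 1, t.2.2)) ?_ ?_ ?_ ?_
  · rintro ⟨a, b, j⟩ - ⟨a', b', j'⟩ - h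
    simp_all
  · rintro ⟨a, b, j⟩ h
    simp only [SetLike.mem_coe, mem_contractionIndex] at h ⊢
    omega
  · rintro ⟨a, _ | b, j⟩ hu hnot
    · simp [qInt_zero]
    · exact absurd ⟨(a, b, j), by simp only [SetLike.mem_coe, mem_contractionIndex] at hu ⊢; omega, rfl⟩ hnot
  · rintro ⟨a, b, j⟩ -
    rw [mul_comm, normalCoeff_raise_d]

lemma sum_contractionIndex_raise_x (n : ℕ) :
    ∑ t ∈ contractionIndex n,
        (normalCoeff n t.1 t.2.1 t.2.2 * q ^ t.2.1) • (x ^ (t.1 + 1) * d ^ t.2.1) =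
      ∑ u ∈ contractionIndex (n + 1),
        (q ^ u.2.1 * qInt u.1 * normalCoeff n u.1 u.2.1 u.2.2) • (x ^ u.1 * d ^ u.2.1) := by
  refine sum_of_injOn (fun t => (t.1 + 1, t.2.1, t.2.2)) ?_ ?_ ?_ ?_
  · rintro ⟨a, b, j⟩ - ⟨a', b', j'⟩ - h
    simp_all
  · rintro ⟨a, b, j⟩ h
    simp only [SetLike.mem_coe, mem_contractionIndex] at h ⊢
    omega
  · rintro ⟨_ | a, b, j⟩ hu hnot
    · simp [qInt_zero]
    · exact absurd ⟨(a, b, j), by simp only [SetLike.mem_coe, mem_contractionIndex] at hu ⊢; omega, rfl⟩ hnot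
  · rintro ⟨a, b, j⟩ -
    rw [mul_comm, mul_assoc, normalCoeff_raise_x]

lemma sum_contractionIndex_contract (n : ℕ) :
    ∑ t ∈ contractionIndex n,
        (normalCoeff n t.1 t.2.1 t.2.2 * qInt t.2.1) • (x ^ t.1 * d ^ (t.2.1 - 1)) =
      ∑ u ∈ contractionIndex (n + 1),
        (q ^ (u.1 + u.2.1) * ((1 + q ^ u.2.2) * qInt u.2.2) * normalCoeff n u.1 u.2.1 u.2.2) •
          (x ^ u.1 * d ^ u.2.1) := by
  rw [← sum_filter_of_ne (p := fun t => t.2.1 ≠ 0)]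
  · refine sum_of_injOn (fun t => (t.1, t.2.1 - 1, t.2.2 + 1)) ?_ ?_ ?_ ?_
    · rintro ⟨a, b, j⟩ ht ⟨a', b', j'⟩ ht' h
      simp only [coe_filter, Set.mem_ofPred_eq, mem_contractionIndex, Prod.mk.injEq] at ht ht' h
      simp only [Prod.mk.injEq]
      omega
    · rintro ⟨a, b, j⟩ h
      simp only [coe_filter, Set.mem_ofPred_eq, SetLike.mem_coe, mem_contractionIndex] at h ⊢
      omega
    · rintro ⟨a, b, _ | j⟩ hu hnot
      · simp [qInt_zero]
      · refine absurd ⟨(a, b + 1, j), ?_, rfl⟩ hnot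
        simp only [coe_filter, Set.mem_ofPred_eq, mem_contractionIndex] at hu ⊢
        omega
    · rintro ⟨a, _ | b, j⟩ ht
      · simp at ht
      · simp only [mem_filter, mem_contractionIndex] at ht
        simp only [Nat.add_sub_cancel]
        rw [mul_comm, normalCoeff_contract (by omega : a + b + 2 * (j + 1) = n + 1)]
  · rintro ⟨a, _ | b, j⟩ - h
    · simp [qInt_zero] at h
    · simp

theorem normalOrder_mul_add_smul (hxd : d * x = 1 + q • (x * d)) (n : ℕ) :
    normalOrder x d n * (x + (q ^ (2 * n + 1) * s) • d) = normalOrder x d (n + 1) := by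
  have hsplit : ∀ u ∈ contractionIndex (n + 1),
      normalCoeff (n + 1) u.1 u.2.1 u.2.2 • (x ^ u.1 * d ^ u.2.1) =
        (q ^ (u.1 + u.2.1) * ((1 + q ^ u.2.2) * qInt u.2.2) * normalCoeff n u.1 u.2.1 u.2.2 +
          q ^ u.2.1 * qInt u.1 * normalCoeff n u.1 u.2.1 u.2.2 +
          q ^ (n + 1) * qInt u.2.1 * normalCoeff n u.1 u.2.1 u.2.2) • (x ^ u.1 * d ^ u.2.1) := by
    rintro ⟨a, b, j⟩ hu
    rw [normalCoeff_succ, q_pow_mul_qInt_split (mem_contractionIndex.1 hu)]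
    congr 1
    ring
  rw [normalOrder, normalOrder, sum_mul, sum_congr rfl hsplit]
  simp only [smul_mul_assoc, qWeyl_monomial_mul hxd, smul_add, smul_smul, add_smul,
    sum_add_distrib, sum_contractionIndex_contract, sum_contractionIndex_raise_x,
    sum_contractionIndex_raise_d]

lemma normalOrder_zero : normalOrder x d 0 = 1 := by
  have hindex : contractionIndex 0 = {(0, 0, 0)} := by
    ext ⟨a, b, j⟩
    simp only [mem_contractionIndex, mem_singleton, Prod.mk.injEq]
    omega
  simp [normalOrder, hindex, normalCoeff, qPochNeg, qFact]

lemma normalOrder_eq_sum_sum (n : ℕ) :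
    normalOrder x d n =
      ∑ m ∈ range (n + 1), ∑ j ∈ range (min m (n - m) + 1),
        (q ^ (n ^ 2 + j ^ 2 - (m + j) * n) * qFact n * s ^ (n - m) /
          (qPochNeg j * qFact j * qFact (m - j) * qFact (n - m - j))) •
          (x ^ (m - j) * d ^ (n - m - j)) := by
  rw [sum_sigma']
  refine sum_nbij' (fun t => ⟨t.1 + t.2.2, t.2.2⟩) (fun p => (p.1 - p.2, n - p.1 - p.2, p.2))
    ?_ ?_ ?_ ?_ ?_
  · rintro ⟨a, b, j⟩ h
    simp only [mem_contractionIndex, mem_sigma, mem_range] at h ⊢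
    omega
  · rintro ⟨m, j⟩ h
    simp only [mem_contractionIndex, mem_sigma, mem_range] at h ⊢
    omega
  · rintro ⟨a, b, j⟩ h
    simp only [mem_contractionIndex, Prod.mk.injEq, and_true] at h ⊢
    omega
  · rintro ⟨m, j⟩ h
    simp only [mem_sigma, mem_range, Sigma.mk.injEq, heq_eq_eq, and_true] at h ⊢
    omega
  · rintro ⟨a, b, j⟩ h
    obtain rfl : n = a + b + 2 * j := (mem_contractionIndex.1 h).symm
    have hexp : (a + b + 2 * j) ^ 2 + j ^ 2 - (a + j + j) * (a + b + 2 * j) =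
        (a + b + 2 * j) * b + j ^ 2 := by
      rw [Nat.sub_eq_iff_eq_add (by nlinarith)]
      ring
    simp only [hexp, normalCoeff, show a + j - j = a by omega,
      show a + b + 2 * j - (a + j) = b + j by omega, show b + j - j = b by omega]

end QWeyl

lemma Gop_eq_normalOrder (n : ℕ) : Gop n = normalOrder Xop Dq n := by
  induction n with
  | zero => exact (normalOrder_zero (x := Xop) (d := Dq)).symm
  | succ n ih => rw [Gop, ih, normalOrder_mul_add_smul Dq_mul_Xop]

theorem Gop_normal_ordering (n : ℕ) :
    Gop n =
      ∑ m ∈ Finset.range (n + 1), ∑ j ∈ Finset.range (min m (n - m) + 1),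
        (q ^ (n ^ 2 + j ^ 2 - (m + j) * n) * qFact n * s ^ (n - m) /
          ((∏ i ∈ Finset.range j, (1 + q ^ (i + 1))) * qFact j * qFact (m - j) *
            qFact (n - m - j))) •
          (Xop ^ (m - j) * Dq ^ (n - m - j)) := by
  rw [Gop_eq_normalOrder, normalOrder_eq_sum_sum]
  rfl

end
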